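/- Let M be an abelian group and let S^{<3}M := ℤ ⊕ M ⊕ S²M denote the symmetric algebra of M over ℤ modulo the ideal of elements of degree ≥ 3, where S²M is the symmetric square. The ring surjection T^{<3}M → S^{<3}M induces a group isomorphism (UM)^{ab} ≅ ker((S^{<3}M)^× → ℤ^×), where the map on unit groups is given by the degree-0 component. -/

import Mathlib

/-! The map `1 + m + t ↦ 1 + m + [t]` is a surjective homomorphism onto a commutative group, so
it factors through the abelianization; its kernel consists of the `1 + t` with `t` in the subgroup
generated by the tensors `a ⊗ b - b ⊗ a`, and `1 + (a ⊗ b - b ⊗ a)` is the commutator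
`⁅1 + a, 1 + b⁆`. Hence the kernel is exactly the commutator subgroup. -/

open scoped TensorProduct

/-- The group `UM`: the kernel of `(T^{<3}M)^× → ℤ^× = {±1}`, where
`T^{<3}M = ℤ ⊕ M ⊕ (M ⊗_ℤ M)` is the tensor algebra of `M` over `ℤ` truncated in
degrees `< 3`.  An element `1 + m + t` (with `m : M`, `t : M ⊗[ℤ] M`) is encoded
as the pair `⟨m, t⟩`, and the multiplication is
`(1+m+t)(1+m'+t') = 1 + (m+m') + (m ⊗ m' + t + t')`. -/
@[ext]
structure UGroup (M : Type) [AddCommGroup M] where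
  m : M
  t : TensorProduct ℤ M M

namespace UGroup

variable {M : Type} [AddCommGroup M]

noncomputable instance : Mul (UGroup M) :=
  ⟨fun x y => ⟨x.m + y.m, x.m ⊗ₜ[ℤ] y.m + x.t + y.t⟩⟩
noncomputable instance : One (UGroup M) := ⟨⟨0, 0⟩⟩
noncomputable instance : Inv (UGroup M) :=
  ⟨fun x => ⟨-x.m, x.m ⊗ₜ[ℤ] x.m - x.t⟩⟩

@[simp] lemma mul_m (x y : UGroup M) : (x * y).m = x.m + y.m := rfl
@[simp] lemma mul_t (x y : UGroup M) : (x * y).t = x.m ⊗ₜ[ℤ] y.m + x.t + y.t := rfl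
@[simp] lemma one_m : (1 : UGroup M).m = 0 := rfl
@[simp] lemma one_t : (1 : UGroup M).t = 0 := rfl
@[simp] lemma inv_m (x : UGroup M) : (x⁻¹).m = -x.m := rfl
@[simp] lemma inv_t (x : UGroup M) : (x⁻¹).t = x.m ⊗ₜ[ℤ] x.m - x.t := rfl

noncomputable instance : Group (UGroup M) where
  mul_assoc x y z := by
    ext
    · simp [add_assoc]
    · simp [TensorProduct.add_tmul, TensorProduct.tmul_add]
      abel
  one_mul x := by ext <;> simp
  mul_one x := by ext <;> simp
  inv_mul_cancel x := by
    ext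
    · simp
    · simp [TensorProduct.neg_tmul]
      abel

/-- The set-theoretic section `s : M → UM`, `m ↦ 1 + m`. -/
noncomputable def s (m : M) : UGroup M := ⟨m, 0⟩

end UGroup

/-- The subgroup of `M ⊗[ℤ] M` generated by all `m ⊗ m' − m' ⊗ m`; the quotient
by it is the symmetric square `S²M`. -/
noncomputable def symSub (M : Type) [AddCommGroup M] : AddSubgroup (TensorProduct ℤ M M) :=
  AddSubgroup.closure {x | ∃ m m' : M, x = m ⊗ₜ[ℤ] m' - m' ⊗ₜ[ℤ] m}

/-- The kernel of `(S^{<3}M)^× → ℤ^×`, where `S^{<3}M = ℤ ⊕ M ⊕ S²M` is the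
symmetric algebra of `M` over `ℤ` truncated in degrees `< 3`.  An element
`1 + m + t` (with `m : M`, `t : S²M`) is encoded as the pair `⟨m, t⟩`, and
`(1+m+t)(1+m'+t') = 1 + (m+m') + ([m ⊗ m'] + t + t')`. -/
@[ext]
structure SUnits (M : Type) [AddCommGroup M] where
  m : M
  t : (TensorProduct ℤ M M) ⧸ symSub M

namespace SUnits

variable {M : Type} [AddCommGroup M]

noncomputable instance : Mul (SUnits M) :=
  ⟨fun x y => ⟨x.m + y.m, QuotientAddGroup.mk (x.m ⊗ₜ[ℤ] y.m) + x.t + y.t⟩⟩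
noncomputable instance : One (SUnits M) := ⟨⟨0, 0⟩⟩
noncomputable instance : Inv (SUnits M) :=
  ⟨fun x => ⟨-x.m, QuotientAddGroup.mk (x.m ⊗ₜ[ℤ] x.m) - x.t⟩⟩

@[simp] lemma mul_m (x y : SUnits M) : (x * y).m = x.m + y.m := rfl
@[simp] lemma mul_t (x y : SUnits M) :
    (x * y).t = QuotientAddGroup.mk (x.m ⊗ₜ[ℤ] y.m) + x.t + y.t := rfl
@[simp] lemma one_m : (1 : SUnits M).m = 0 := rfl
@[simp] lemma one_t : (1 : SUnits M).t = 0 := rfl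
@[simp] lemma inv_m (x : SUnits M) : (x⁻¹).m = -x.m := rfl
@[simp] lemma inv_t (x : SUnits M) :
    (x⁻¹).t = QuotientAddGroup.mk (x.m ⊗ₜ[ℤ] x.m) - x.t := rfl

noncomputable instance : CommGroup (SUnits M) where
  mul_assoc x y z := by
    ext
    · simp [add_assoc]
    · have h1 : ((QuotientAddGroup.mk ((x.m + y.m) ⊗ₜ[ℤ] z.m) :
          (TensorProduct ℤ M M) ⧸ symSub M)) =
          QuotientAddGroup.mk (x.m ⊗ₜ[ℤ] z.m) + QuotientAddGroup.mk (y.m ⊗ₜ[ℤ] z.m) := by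
        rw [TensorProduct.add_tmul, QuotientAddGroup.mk_add]
      have h2 : ((QuotientAddGroup.mk (x.m ⊗ₜ[ℤ] (y.m + z.m)) :
          (TensorProduct ℤ M M) ⧸ symSub M)) =
          QuotientAddGroup.mk (x.m ⊗ₜ[ℤ] y.m) + QuotientAddGroup.mk (x.m ⊗ₜ[ℤ] z.m) := by
        rw [TensorProduct.tmul_add, QuotientAddGroup.mk_add]
      simp only [mul_m, mul_t, h1, h2]
      abel
  one_mul x := by ext <;> simp
  mul_one x := by ext <;> simp
  inv_mul_cancel x := by
    ext
    · simp
    · have h : ((QuotientAddGroup.mk ((-x.m) ⊗ₜ[ℤ] x.m) :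
          (TensorProduct ℤ M M) ⧸ symSub M)) =
          -QuotientAddGroup.mk (x.m ⊗ₜ[ℤ] x.m) := by
        rw [TensorProduct.neg_tmul, QuotientAddGroup.mk_neg]
      simp only [mul_m, mul_t, inv_m, inv_t, one_m, one_t, h]
      abel
  mul_comm x y := by
    ext
    · exact add_comm _ _
    · have h : ((QuotientAddGroup.mk (x.m ⊗ₜ[ℤ] y.m) :
          (TensorProduct ℤ M M) ⧸ symSub M)) = QuotientAddGroup.mk (y.m ⊗ₜ[ℤ] x.m) := by
        rw [QuotientAddGroup.eq_iff_sub_mem]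
        exact AddSubgroup.subset_closure ⟨x.m, y.m, rfl⟩
      simp only [mul_m, mul_t, h]
      abel

end SUnits

open scoped commutatorElement

namespace UGroup

variable {M : Type} [AddCommGroup M]

noncomputable def toSUnits : UGroup M →* SUnits M where
  toFun x := ⟨x.m, QuotientAddGroup.mk x.t⟩
  map_one' := rfl
  map_mul' _ _ := rfl

lemma toSUnits_surjective : Function.Surjective (toSUnits (M := M)) := by
  rintro ⟨m, t⟩
  obtain ⟨t, rfl⟩ := QuotientAddGroup.mk_surjective t
  exact ⟨⟨m, t⟩, rfl⟩

lemma commutatorElement_s (a b : M) :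
    ⁅s a, s b⁆ = (⟨0, a ⊗ₜ[ℤ] b - b ⊗ₜ[ℤ] a⟩ : UGroup M) := by
  ext
  · simp [commutatorElement_def, s]
  · simp [commutatorElement_def, s, TensorProduct.add_tmul, TensorProduct.tmul_neg]
    abel

noncomputable def ofTensor : Multiplicative (M ⊗[ℤ] M) →* UGroup M where
  toFun t := ⟨0, t.toAdd⟩
  map_one' := rfl
  map_mul' t t' := by ext <;> simp

lemma mk_zero_mem_commutator {t : M ⊗[ℤ] M} (ht : t ∈ symSub M) :
    (⟨0, t⟩ : UGroup M) ∈ commutator (UGroup M) := by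
  suffices symSub M ≤ Subgroup.toAddSubgroup ((commutator (UGroup M)).comap ofTensor) from this ht
  refine (AddSubgroup.closure_le _).mpr ?_
  rintro _ ⟨a, b, rfl⟩
  show (⟨0, a ⊗ₜ[ℤ] b - b ⊗ₜ[ℤ] a⟩ : UGroup M) ∈ commutator (UGroup M)
  rw [← commutatorElement_s]
  exact Subgroup.commutator_mem_commutator (Subgroup.mem_top _) (Subgroup.mem_top _)

lemma ker_toSUnits : (toSUnits (M := M)).ker = commutator (UGroup M) := by
  refine le_antisymm (fun x hx => ?_) (Abelianization.commutator_subset_ker _)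
  have hm : x.m = 0 := congrArg SUnits.m hx
  have ht : x.t ∈ symSub M := (QuotientAddGroup.eq_zero_iff _).mp (congrArg SUnits.t hx)
  simpa [← hm] using mk_zero_mem_commutator ht

end UGroup

/-- (Remark 2.4(a), last part.)  The ring surjection `T^{<3}M → S^{<3}M` induces
a group isomorphism `(UM)^{ab} ≅ ker((S^{<3}M)^× → ℤ^×)`, sending the class of
`1 + m + t` to `1 + m + [t]`. -/
theorem self_cup_stmt_6 (M : Type) [AddCommGroup M] :
    ∃ e : Abelianization (UGroup M) ≃* SUnits M,
      ∀ x : UGroup M,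
        e (Abelianization.of x) = ⟨x.m, QuotientAddGroup.mk x.t⟩ :=
  ⟨(QuotientGroup.quotientMulEquivOfEq UGroup.ker_toSUnits.symm).trans
      (QuotientGroup.quotientKerEquivOfSurjective _ UGroup.toSUnits_surjective),
    fun _ => rfl⟩
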